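/- arXiv:2202.12114 — 4 statements merged into one kernel-verified Lean document; each statement's English description precedes it below -/
import Mathlib

section
/- Let d ≥ 1, let Λ be a finite nonempty type, and let F₁, G₁, F₂, G₂, F₃, G₃ : Λ → Matrix (Fin d) (Fin d) ℂ be families such that (F₂, G₂) is a dual frame pair, i.e. every matrix O satisfies O = Σ_{λ∈Λ} Tr(F₂(λ) * O) • G₂(λ). For matrices U, V define the transition quasi-probabilities W_U(λ₂|λ₁) := Tr(F₂(λ₂) * U * G₁(λ₁) * Uᴴ), W_V(λ₃|λ₂) := Tr(F₃(λ₃) * V * G₂(λ₂) * Vᴴ), and W_{VU}(λ₃|λ₁) := Tr(F₃(λ₃) * (V*U) * G₁(λ₁) * (V*U)ᴴ). Then for all λ₁, λ₃ ∈ Λ: W_{VU}(λ₃|λ₁) = Σ_{λ₂∈Λ} W_V(λ₃|λ₂) · W_U(λ₂|λ₁). -/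
open Matrix

theorem merged_gate_kernel_composition
    {d : ℕ} (hd : 1 ≤ d) {Λ : Type*} [Fintype Λ] [Nonempty Λ]
    (F₁ G₁ F₂ G₂ F₃ G₃ : Λ → Matrix (Fin d) (Fin d) ℂ)
    (hdual₂ : ∀ O : Matrix (Fin d) (Fin d) ℂ,
      O = ∑ μ : Λ, (F₂ μ * O).trace • G₂ μ)
    (U V : Matrix (Fin d) (Fin d) ℂ) (lam₁ lam₃ : Λ) :
    (F₃ lam₃ * (V * U) * G₁ lam₁ * (V * U)ᴴ).trace =
      ∑ lam₂ : Λ, (F₃ lam₃ * V * G₂ lam₂ * Vᴴ).trace *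
        (F₂ lam₂ * U * G₁ lam₁ * Uᴴ).trace := by
  have key : F₃ lam₃ * (V * U) * G₁ lam₁ * (V * U)ᴴ
      = F₃ lam₃ * V * (U * G₁ lam₁ * Uᴴ) * Vᴴ := by
    simp [Matrix.conjTranspose_mul, Matrix.mul_assoc]
  rw [key, hdual₂ (U * G₁ lam₁ * Uᴴ), Finset.mul_sum, Finset.sum_mul,
    Matrix.trace_sum]
  refine Finset.sum_congr rfl fun μ _ => ?_
  rw [Matrix.mul_smul, Matrix.smul_mul, Matrix.trace_smul, smul_eq_mul, mul_comm]
  simp [Matrix.mul_assoc]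
end

section
/- Let d ≥ 1, let Λ be a finite nonempty type, and let (F, G) with F, G : Λ → Matrix (Fin d) (Fin d) ℂ be a dual frame pair, i.e. every matrix O satisfies O = Σ_{λ∈Λ} Tr(F(λ) * O) • G(λ). For a matrix U define W_U(λ'|λ) := Tr(F(λ') * U * G(λ) * Uᴴ) and the gate negativity N_U := max_{λ∈Λ} Σ_{λ'∈Λ} |W_U(λ'|λ)|. Then for any two matrices U, V: N_{V*U} ≤ N_V · N_U. -/
/-!
The transition kernels compose like Markov kernels: inserting the dual frame expansion of
`U G(λ) Uᴴ` between `V` and `Vᴴ` shows `W_{VU}(λ'|λ) = Σ_μ W_V(λ'|μ) W_U(μ|λ)`, i.e. the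
transition matrix of `V U` is the product of those of `V` and `U`. The negativity is the
largest column ℓ¹-norm of the transition matrix, which is submultiplicative.
-/

open Matrix

/-- The negativity of a gate `U` in the frame with frame operators `F` and dual
frame operators `G`: the maximal column ℓ1-norm of the transition
quasi-probability kernel `W_U(λ'|λ) = Tr(F(λ') * U * G(λ) * Uᴴ)`. -/
noncomputable def gateNegativity {d : ℕ} {Λ : Type*} [Fintype Λ] [Nonempty Λ]
    (F G : Λ → Matrix (Fin d) (Fin d) ℂ) (U : Matrix (Fin d) (Fin d) ℂ) : ℝ :=
  Finset.univ.sup' Finset.univ_nonempty fun lam : Λ =>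
    ∑ lam' : Λ, ‖(F lam' * U * G lam * Uᴴ).trace‖

namespace Matrix

variable {n Λ R : Type*} [Fintype n] [Fintype Λ] [CommSemiring R] [StarRing R]

/-- The paper's `W_U(λ'|λ)`, as a matrix indexed by `(λ', λ)`. -/
def frameTransition (F G : Λ → Matrix n n R) (U : Matrix n n R) : Matrix Λ Λ R :=
  of fun lam' lam => (F lam' * U * G lam * Uᴴ).trace

theorem frameTransition_mul {F G : Λ → Matrix n n R}
    (hdual : ∀ O : Matrix n n R, O = ∑ μ : Λ, (F μ * O).trace • G μ) (U V : Matrix n n R) :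
    frameTransition F G (V * U) = frameTransition F G V * frameTransition F G U := by
  ext lam' lam
  have hconj : F lam' * (V * U) * G lam * (V * U)ᴴ = F lam' * V * (U * G lam * Uᴴ) * Vᴴ := by
    simp only [conjTranspose_mul, Matrix.mul_assoc]
  rw [frameTransition, of_apply, hconj, hdual (U * G lam * Uᴴ), Matrix.mul_sum, Matrix.sum_mul,
    trace_sum, mul_apply]
  refine Finset.sum_congr rfl fun μ _ => ?_
  simp only [mul_smul_comm, smul_mul_assoc, trace_smul, smul_eq_mul, frameTransition, of_apply,
    Matrix.mul_assoc, mul_comm]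

end Matrix

section

attribute [local instance] Matrix.linftyOpNormedAddCommGroup

theorem gateNegativity_eq_linfty_opNorm_transpose {d : ℕ} {Λ : Type*} [Fintype Λ] [Nonempty Λ]
    (F G : Λ → Matrix (Fin d) (Fin d) ℂ) (U : Matrix (Fin d) (Fin d) ℂ) :
    gateNegativity F G U = ‖(frameTransition F G U)ᵀ‖ := by
  rw [linfty_opNorm_def, ← Finset.sup'_eq_sup Finset.univ_nonempty,
    Finset.apply_sup'_eq_sup'_comp _ _ fun _ _ => NNReal.coe_max _ _]
  simp [gateNegativity, frameTransition, Function.comp_def]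

theorem merged_gate_negativity_submultiplicative_general
    {d : ℕ} {Λ : Type*} [Fintype Λ] [Nonempty Λ]
    (F G : Λ → Matrix (Fin d) (Fin d) ℂ)
    (hdual : ∀ O : Matrix (Fin d) (Fin d) ℂ,
      O = ∑ μ : Λ, (F μ * O).trace • G μ)
    (U V : Matrix (Fin d) (Fin d) ℂ) :
    gateNegativity F G (V * U) ≤ gateNegativity F G V * gateNegativity F G U := by
  simp only [gateNegativity_eq_linfty_opNorm_transpose, frameTransition_mul hdual, transpose_mul]
  rw [mul_comm]
  exact linfty_opNorm_mul _ _

theorem merged_gate_negativity_submultiplicative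
    {d : ℕ} (hd : 1 ≤ d) {Λ : Type*} [Fintype Λ] [Nonempty Λ]
    (F G : Λ → Matrix (Fin d) (Fin d) ℂ)
    (hdual : ∀ O : Matrix (Fin d) (Fin d) ℂ,
      O = ∑ μ : Λ, (F μ * O).trace • G μ)
    (U V : Matrix (Fin d) (Fin d) ℂ) :
    gateNegativity F G (V * U) ≤ gateNegativity F G V * gateNegativity F G U :=
  merged_gate_negativity_submultiplicative_general F G hdual U V

end
end

section
/- Let d ≥ 1, L ≥ 1, let Λ be a finite nonempty type, and for each l = 0, 1, …, L let (F_l, G_l) be a dual frame pair of families Λ → Matrix (Fin d) (Fin d) ℂ, i.e. every matrix O satisfies O = Σ_{λ} Tr(F_l(λ) * O) • G_l(λ). Let ρ, E and U₁, …, U_L be matrices, and let σ := U_L * ⋯ * U₁ * ρ * U₁ᴴ * ⋯ * U_Lᴴ. Then Tr(σ * E) = Σ over all trajectories (λ₀, λ₁, …, λ_L) ∈ Λ^{L+1} of Tr(E * G_L(λ_L)) · (∏_{l=1}^{L} Tr(F_l(λ_l) * U_l * G_{l-1}(λ_{l-1}) * U_lᴴ)) · Tr(F₀(λ₀) * ρ).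 -/
open Matrix

private lemma trace_conj_aux {d : ℕ} (A B C : Matrix (Fin d) (Fin d) ℂ) :
    (A * (B * C * Bᴴ)).trace = (Bᴴ * A * B * C).trace := by
  simp only [← mul_assoc]
  rw [trace_mul_comm]
  simp only [← mul_assoc]

private lemma trace_conj_aux' {d : ℕ} (A B C : Matrix (Fin d) (Fin d) ℂ) :
    (Bᴴ * A * B * C).trace = (A * B * C * Bᴴ).trace := by
  conv_rhs => rw [trace_mul_comm]
  simp only [← mul_assoc]

private lemma key_expansion {d : ℕ} {Λ : Type*} [Fintype Λ] :
    ∀ (n : ℕ) (F G : Fin (n + 1) → Λ → Matrix (Fin d) (Fin d) ℂ),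
      (∀ l : Fin (n + 1), ∀ O : Matrix (Fin d) (Fin d) ℂ,
        O = ∑ μ : Λ, (F l μ * O).trace • G l μ) →
      ∀ (ρ E : Matrix (Fin d) (Fin d) ℂ) (U : Fin n → Matrix (Fin d) (Fin d) ℂ),
      ((List.ofFn U).reverse.prod * ρ * ((List.ofFn U).reverse.prod)ᴴ * E).trace =
        ∑ lam : Fin (n + 1) → Λ,
          (E * G (Fin.last n) (lam (Fin.last n))).trace *
            (∏ l : Fin n,
              (F l.succ (lam l.succ) * U l * G l.castSucc (lam l.castSucc) *
                (U l)ᴴ).trace) *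
            (F 0 (lam 0) * ρ).trace := by
  intro n
  induction n with
  | zero =>
    intro F G hdual ρ E U
    have h1 : ((List.ofFn U).reverse.prod * ρ * ((List.ofFn U).reverse.prod)ᴴ * E).trace
        = ∑ μ : Λ, (E * G (Fin.last 0) μ).trace * (∏ l : Fin 0,
              (F l.succ ((fun _ => μ) l.succ) * U l * G l.castSucc ((fun _ => μ) l.castSucc) *
                (U l)ᴴ).trace) * (F 0 μ * ρ).trace := by
      simp only [List.ofFn_zero, List.reverse_nil, List.prod_nil, one_mul,
        conjTranspose_one, mul_one, Finset.univ_eq_empty, Finset.prod_empty]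
      conv_lhs => rw [hdual 0 ρ]
      rw [Finset.sum_mul, trace_sum]
      refine Finset.sum_congr rfl fun μ _ => ?_
      rw [smul_mul_assoc, trace_smul, smul_eq_mul, trace_mul_comm (G 0 μ) E,
        show Fin.last 0 = 0 from rfl]
      ring
    rw [h1]
    exact Fintype.sum_equiv (Equiv.funUnique (Fin 1) Λ).symm _ _ (fun μ => by
      simp [Equiv.funUnique])
  | succ n ih =>
    intro F G hdual ρ E U
    have hlist : (List.ofFn U).reverse.prod
        = U (Fin.last n) * (List.ofFn fun i : Fin n => U i.castSucc).reverse.prod := by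
      rw [List.ofFn_succ', List.concat_eq_append, List.reverse_append,
        List.reverse_singleton, List.singleton_append, List.prod_cons]
    set P := (List.ofFn fun i : Fin n => U i.castSucc).reverse.prod with hP
    have hLHS : ((List.ofFn U).reverse.prod * ρ * ((List.ofFn U).reverse.prod)ᴴ * E).trace
        = ((U (Fin.last n) * (P * ρ * Pᴴ) * (U (Fin.last n))ᴴ) * E).trace := by
      rw [hlist, conjTranspose_mul]
      simp only [mul_assoc]
    have hstep : ((U (Fin.last n) * (P * ρ * Pᴴ) * (U (Fin.last n))ᴴ) * E).trace
        = ∑ ν : Λ, (F (Fin.last (n + 1)) ν *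
            (U (Fin.last n) * (P * ρ * Pᴴ) * (U (Fin.last n))ᴴ)).trace *
            (E * G (Fin.last (n + 1)) ν).trace := by
      conv_lhs => rw [hdual (Fin.last (n + 1))
        (U (Fin.last n) * (P * ρ * Pᴴ) * (U (Fin.last n))ᴴ)]
      rw [Finset.sum_mul, trace_sum]
      refine Finset.sum_congr rfl fun ν _ => ?_
      rw [smul_mul_assoc, trace_smul, smul_eq_mul, trace_mul_comm E]
    have hc : ∀ ν : Λ, (F (Fin.last (n + 1)) ν *
            (U (Fin.last n) * (P * ρ * Pᴴ) * (U (Fin.last n))ᴴ)).trace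
        = ∑ lam' : Fin (n + 1) → Λ,
            ((U (Fin.last n))ᴴ * F (Fin.last (n + 1)) ν * U (Fin.last n) *
              G ((Fin.last n).castSucc) (lam' (Fin.last n))).trace *
            (∏ l : Fin n,
              (F l.succ.castSucc (lam' l.succ) * U l.castSucc *
                G l.castSucc.castSucc (lam' l.castSucc) * (U l.castSucc)ᴴ).trace) *
            (F 0 (lam' 0) * ρ).trace := by
      intro ν
      rw [trace_conj_aux, trace_mul_comm, hP]
      exact ih (fun l => F l.castSucc) (fun l => G l.castSucc)
        (fun l O => hdual l.castSucc O) ρ _ (fun i => U i.castSucc)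
    rw [hLHS, hstep]
    simp_rw [hc, Finset.sum_mul]
    -- RHS: reindex via snoc
    rw [show (∑ lam : Fin (n + 1 + 1) → Λ,
          (E * G (Fin.last (n + 1)) (lam (Fin.last (n + 1)))).trace *
            (∏ l : Fin (n + 1),
              (F l.succ (lam l.succ) * U l * G l.castSucc (lam l.castSucc) *
                (U l)ᴴ).trace) *
            (F 0 (lam 0) * ρ).trace)
        = ∑ p : Λ × (Fin (n + 1) → Λ),
            (E * G (Fin.last (n + 1)) ((Fin.snoc p.2 p.1 : Fin (n+1+1) → Λ) (Fin.last (n + 1)))).trace *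
            (∏ l : Fin (n + 1),
              (F l.succ ((Fin.snoc p.2 p.1 : Fin (n+1+1) → Λ) l.succ) * U l *
                G l.castSucc ((Fin.snoc p.2 p.1 : Fin (n+1+1) → Λ) l.castSucc) *
                (U l)ᴴ).trace) *
            (F 0 ((Fin.snoc p.2 p.1 : Fin (n+1+1) → Λ) 0) * ρ).trace
        from (Fintype.sum_equiv (Fin.snocEquiv (fun _ => Λ)) _ _ (fun p => rfl)).symm]
    rw [Fintype.sum_prod_type]
    refine Finset.sum_congr rfl fun ν _ => ?_
    refine Finset.sum_congr rfl fun lam' _ => ?_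
    rw [Fin.prod_univ_castSucc]
    simp only [Fin.snoc_last, Fin.snoc_castSucc, Fin.succ_castSucc, Fin.succ_last]
    have h0 : (Fin.snoc lam' ν : Fin (n+1+1) → Λ) 0 = lam' 0 := by
      rw [show (0 : Fin (n+1+1)) = Fin.castSucc 0 from rfl, Fin.snoc_castSucc]
    rw [h0, trace_conj_aux']
    ring

open Matrix

/-- Equation (2) of the paper: the outcome probability of a circuit with input
state `ρ`, gate sequence `U₁, …, U_L` (here `U l` for `l : Fin L` is the
`(l+1)`-st gate) and measurement effect `E`, where the wire after the `l`-th
gate carries the dual frame pair `(F l, G l)`, equals the sum over all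
phase-space trajectories `(λ₀, …, λ_L)` of the product of the component
quasi-probabilities. -/
theorem born_probability_trajectory_expansion
    {d L : ℕ} (hd : 1 ≤ d) (hL : 1 ≤ L) {Λ : Type*} [Fintype Λ] [Nonempty Λ]
    (F G : Fin (L + 1) → Λ → Matrix (Fin d) (Fin d) ℂ)
    (hdual : ∀ l : Fin (L + 1), ∀ O : Matrix (Fin d) (Fin d) ℂ,
      O = ∑ μ : Λ, (F l μ * O).trace • G l μ)
    (ρ E : Matrix (Fin d) (Fin d) ℂ)
    (U : Fin L → Matrix (Fin d) (Fin d) ℂ)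
    (σ : Matrix (Fin d) (Fin d) ℂ)
    (hσ : σ = (List.ofFn U).reverse.prod * ρ * ((List.ofFn U).reverse.prod)ᴴ) :
    (σ * E).trace =
      ∑ lam : Fin (L + 1) → Λ,
        (E * G (Fin.last L) (lam (Fin.last L))).trace *
          (∏ l : Fin L,
            (F l.succ (lam l.succ) * U l * G l.castSucc (lam l.castSucc) *
              (U l)ᴴ).trace) *
          (F 0 (lam 0) * ρ).trace := by
  rw [hσ]
  exact key_expansion L F G hdual ρ E U
end

section
/- Define the qubit displacement operators D : (ZMod 2 × ZMod 2) → Matrix (Fin 2) (Fin 2) ℂ by D(0,0) = 1, D(0,1) = X := !![0,1;1,0], D(1,0) = Z := !![1,0;0,-1], D(1,1) = i • (Z * X), and the Pauli frame F(λ) := (1/2) • D(λ), G(λ) := D(λ). Let U ∈ Matrix (Fin 2) (Fin 2) ℂ be a unitary such that for every λ ∈ (ZMod 2)² there exist μ ∈ (ZMod 2)² and ε ∈ {1, -1} with U * D(λ) * Uᴴ = ε • D(μ). Then for every λ ∈ (ZMod 2)²: Σ_{λ' ∈ (ZMod 2)²} |Tr(F(λ') * U * G(λ) * Uᴴ)|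 = 1. -/
open Matrix

/-- The Pauli `X` matrix. -/
noncomputable def PauliX : Matrix (Fin 2) (Fin 2) ℂ := !![0, 1; 1, 0]

/-- The Pauli `Z` matrix. -/
noncomputable def PauliZ : Matrix (Fin 2) (Fin 2) ℂ := !![1, 0; 0, -1]

/-- The qubit displacement operators `D(p,q) = i^{pq} Z^p X^q`. -/
noncomputable def Disp : ZMod 2 × ZMod 2 → Matrix (Fin 2) (Fin 2) ℂ := fun lam =>
  if lam = (0, 0) then 1
  else if lam = (0, 1) then PauliX
  else if lam = (1, 0) then PauliZ
  else Complex.I • (PauliZ * PauliX)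

/-! The displacement operators are trace-orthogonal, `Tr (D a * D b) = 2 δ_ab`. A Clifford gate
conjugates `G(λ) = D(λ)` to `±D(μ)`, so the column `W_U(· | λ)` of the transition kernel is
`±δ_μ`, whose ℓ1-norm is `1`. -/

theorem zmod_two_pair_cases (x : ZMod 2 × ZMod 2) :
    x = (0, 0) ∨ x = (0, 1) ∨ x = (1, 0) ∨ x = (1, 1) := by
  revert x
  decide

theorem disp_zero_zero : Disp (0, 0) = !![1, 0; 0, 1] := by
  rw [Disp, if_pos rfl, one_fin_two]

theorem disp_zero_one : Disp (0, 1) = !![0, 1; 1, 0] := by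
  rw [Disp, if_neg (by decide), if_pos rfl, PauliX]

theorem disp_one_zero : Disp (1, 0) = !![1, 0; 0, -1] := by
  rw [Disp, if_neg (by decide), if_neg (by decide), if_pos rfl, PauliZ]

theorem disp_one_one : Disp (1, 1) = !![0, Complex.I; -Complex.I, 0] := by
  rw [Disp, if_neg (by decide), if_neg (by decide), if_neg (by decide), PauliZ, PauliX]
  simp [smul_of, smul_cons]

theorem trace_disp_mul_disp (a b : ZMod 2 × ZMod 2) :
    (Disp a * Disp b).trace = if a = b then 2 else 0 := by
  rcases zmod_two_pair_cases a with rfl | rfl | rfl | rfl <;>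
    rcases zmod_two_pair_cases b with rfl | rfl | rfl | rfl <;>
    simp [disp_zero_zero, disp_zero_one, disp_one_zero, disp_one_one, trace_fin_two,
      one_add_one_eq_two]

theorem trace_half_smul_disp_mul_conj {U : Matrix (Fin 2) (Fin 2) ℂ} {lam μ : ZMod 2 × ZMod 2}
    {ε : ℂ} (h : U * Disp lam * Uᴴ = ε • Disp μ) (lam' : ZMod 2 × ZMod 2) :
    (((1 / 2 : ℂ) • Disp lam') * U * Disp lam * Uᴴ).trace = if lam' = μ then ε else 0 := by
  simp only [mul_assoc]
  rw [← mul_assoc U, h, smul_mul_assoc, mul_smul_comm, trace_smul, trace_smul,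
    trace_disp_mul_disp]
  split_ifs <;> simp only [smul_eq_mul] <;> ring

theorem clifford_gate_pauli_frame_negativity_one_general
    (U : Matrix (Fin 2) (Fin 2) ℂ)
    (hClif : ∀ lam : ZMod 2 × ZMod 2, ∃ μ : ZMod 2 × ZMod 2, ∃ ε : ℂ,
      (ε = 1 ∨ ε = -1) ∧ U * Disp lam * Uᴴ = ε • Disp μ)
    (lam : ZMod 2 × ZMod 2) :
    ∑ lam' : ZMod 2 × ZMod 2,
      ‖(((1 / 2 : ℂ) • Disp lam') * U * Disp lam * Uᴴ).trace‖ = 1 := by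
  obtain ⟨μ, ε, hε, hconj⟩ := hClif lam
  simp only [trace_half_smul_disp_mul_conj hconj, apply_ite norm, norm_zero,
    Finset.sum_ite_eq', Finset.mem_univ, if_true]
  rcases hε with rfl | rfl <;> simp

/-- A single-qubit Clifford gate, i.e. a unitary mapping each displacement
operator to a signed displacement operator under conjugation, has negativity
equal to `1` in the Pauli frame `F(λ) = (1/2) • D(λ)`, `G(λ) = D(λ)`:
every column of its transition quasi-probability kernel has ℓ1-norm `1`. -/
theorem clifford_gate_pauli_frame_negativity_one
    (U : Matrix (Fin 2) (Fin 2) ℂ)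
    (hU : U ∈ Matrix.unitaryGroup (Fin 2) ℂ)
    (hClif : ∀ lam : ZMod 2 × ZMod 2, ∃ μ : ZMod 2 × ZMod 2, ∃ ε : ℂ,
      (ε = 1 ∨ ε = -1) ∧ U * Disp lam * Uᴴ = ε • Disp μ)
    (lam : ZMod 2 × ZMod 2) :
    ∑ lam' : ZMod 2 × ZMod 2,
      ‖(((1 / 2 : ℂ) • Disp lam') * U * Disp lam * Uᴴ).trace‖ = 1 :=
  clifford_gate_pauli_frame_negativity_one_general U hClif lam
end
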